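/- Let φ : ℝ³ → ℝ be twice continuously differentiable with ∂_zφ(x) ≠ 0 for all x, and let f, g : ℝ³ → ℝ be continuously differentiable with compact support. Then for every i ∈ {1,2,3}: ∫_S (∂_i^φ f) g ∂_zφ dy dz = − ∫_S f (∂_i^φ g) ∂_zφ dy dz + ∫_{ℝ²} f(y,0) g(y,0) N_i(y) dy, where N(y) = (−∂₁φ(y,0), −∂₂φ(y,0), 1). -/

import Mathlib

/-!
The operators `∂ᵢ^φ` are derivations, so `(∂ᵢ^φ f) g + f (∂ᵢ^φ g) = ∂ᵢ^φ (f g)` and it suffices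
to integrate `(∂ᵢ^φ h) ∂_zφ` over `S` for `h = f g`. For `i = 3` this is `∂_z h`; for `i = 1, 2`
the symmetry of the second derivatives of `φ` puts it in divergence form
`∂ᵢ(h ∂_zφ) − ∂_z(h ∂ᵢφ)`. By Fubini and the fundamental theorem of calculus on the lines parallel
to a coordinate axis, the integral over `S` of `∂ⱼ u`, for `u` of class `C¹` with compact support,
vanishes for a tangential direction `j` and equals `∫ u(y,0) dy` for the normal one.
-/

open MeasureTheory

/-- The `i`-th partial derivative of a function on `ℝ³` (coordinates `x = (y₁, y₂, z)`,
with `z` the coordinate of index `2`). -/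
noncomputable def pd (i : Fin 3) (f : (Fin 3 → ℝ) → ℝ) (x : Fin 3 → ℝ) : ℝ :=
  fderiv ℝ f x (Pi.single i 1)

/-- The operators `∂ᵢ^φ` associated to `φ`. -/
noncomputable def pdphi (φ : (Fin 3 → ℝ) → ℝ) (i : Fin 3) (f : (Fin 3 → ℝ) → ℝ)
    (x : Fin 3 → ℝ) : ℝ :=
  if i = 2 then pd 2 f x / pd 2 φ x
  else pd i f x - pd i φ x / pd 2 φ x * pd 2 f x

/-- The lower half-space `S = ℝ² × (−∞, 0)` of `ℝ³`. -/
def lowerHalf : Set (Fin 3 → ℝ) := {x | x 2 < 0}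

open Set

section NormedSpace

variable {E F : Type*} [NormedAddCommGroup E] [NormedSpace ℝ E] [NormedAddCommGroup F] {h : E → F}

theorem HasCompactSupport.comp_line (hs : HasCompactSupport h) (x : E) {v : E} (hv : v ≠ 0) :
    HasCompactSupport fun t : ℝ => h (x + t • v) :=
  hs.comp_isClosedEmbedding ((Homeomorph.addLeft x).isClosedEmbedding.comp
    (isClosedEmbedding_smul_left hv))

variable [NormedSpace ℝ F]

theorem hasDerivAt_comp_line (hh : Differentiable ℝ h) (x v : E) (t : ℝ) :
    HasDerivAt (fun t : ℝ => h (x + t • v)) (fderiv ℝ h (x + t • v) v) t :=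
  (hh _).hasFDerivAt.comp_hasDerivAt t (by simpa using ((hasDerivAt_id t).smul_const v).const_add x)

theorem ContDiff.comp_line (hh : ContDiff ℝ 1 h) (x v : E) :
    ContDiff ℝ 1 fun t : ℝ => h (x + t • v) :=
  hh.comp (contDiff_const.add (contDiff_id.smul contDiff_const))

theorem integral_fderiv_line_eq_zero (hh : ContDiff ℝ 1 h) (hs : HasCompactSupport h) (x : E)
    {v : E} (hv : v ≠ 0) : ∫ t : ℝ, fderiv ℝ h (x + t • v) v = 0 :=
  integral_eq_zero_of_hasDerivAt_of_integrable
    (hasDerivAt_comp_line (hh.differentiable one_ne_zero) x v)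
    (((hh.continuous_fderiv one_ne_zero).comp (by fun_prop)).clm_apply continuous_const
      |>.integrable_of_hasCompactSupport ((hs.fderiv_apply (𝕜 := ℝ) v).comp_line x hv))
    ((hh.comp_line x v).continuous.integrable_of_hasCompactSupport (hs.comp_line x hv))

theorem integral_Iio_fderiv_line [CompleteSpace F] (hh : ContDiff ℝ 1 h)
    (hs : HasCompactSupport h) (x : E) {v : E} (hv : v ≠ 0) :
    ∫ t in Iio (0 : ℝ), fderiv ℝ h (x + t • v) v = h x := by
  have hderiv (t : ℝ) : deriv (fun t : ℝ => h (x + t • v)) t = fderiv ℝ h (x + t • v) v :=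
    (hasDerivAt_comp_line (hh.differentiable one_ne_zero) x v t).deriv
  simpa [hderiv, setIntegral_congr_set Iio_ae_eq_Iic] using
    (hs.comp_line x hv).integral_Iic_deriv_eq (hh.comp_line x v) 0

theorem fderiv_fderiv_apply_comm {f : E → F} (hf : ContDiff ℝ 2 f) (x v w : E) :
    fderiv ℝ (fun y => fderiv ℝ f y w) x v = fderiv ℝ (fun y => fderiv ℝ f y v) x w := by
  have hd : Differentiable ℝ (fderiv ℝ f) := (hf.fderiv_right le_rfl).differentiable one_ne_zero
  simp only [fderiv_clm_apply (hd x) (differentiableAt_const _), fderiv_fun_const, Pi.zero_apply,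
    ContinuousLinearMap.comp_zero, zero_add, ContinuousLinearMap.flip_apply]
  exact (hf.contDiffAt.isSymmSndFDerivAt (by simp)).eq v w

end NormedSpace

section Coordinates

variable {n : ℕ} {E : Type*} [NormedAddCommGroup E] [NormedSpace ℝ E] {h : (Fin (n + 1) → ℝ) → E}

theorem insertNth_eq_insertNth_zero_add_smul (i : Fin (n + 1)) (a : ℝ) (y : Fin n → ℝ) :
    i.insertNth a y = i.insertNth 0 y + a • Pi.single i 1 := by
  rw [← Pi.single_smul, smul_eq_mul, mul_one, ← Fin.insertNth_zero_right, ← Fin.insertNth_add,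
    zero_add, add_zero]

theorem integral_eq_integral_integral_insertNth {F : (Fin (n + 1) → ℝ) → E} (hF : Integrable F)
    (i : Fin (n + 1)) : ∫ x, F x = ∫ y : Fin n → ℝ, ∫ a : ℝ, F (i.insertNth a y) := by
  have he := (volume_preserving_piFinSuccAbove (fun _ : Fin (n + 1) => ℝ) i).symm
  rw [← he.integral_comp', Measure.volume_eq_prod, integral_prod_symm]
  · rfl
  · rw [← Measure.volume_eq_prod]
    exact he.integrable_comp_emb (MeasurableEquiv.measurableEmbedding _) |>.mpr hF

theorem ContDiff.integrable_fderiv_apply (hh : ContDiff ℝ 1 h)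
    (hs : HasCompactSupport h) (v : Fin (n + 1) → ℝ) : Integrable fun x => fderiv ℝ h x v :=
  ((hh.continuous_fderiv one_ne_zero).clm_apply continuous_const).integrable_of_hasCompactSupport
    (hs.fderiv_apply (𝕜 := ℝ) v)

theorem setIntegral_halfSpace_fderiv_single_self [CompleteSpace E] (hh : ContDiff ℝ 1 h)
    (hs : HasCompactSupport h) (i : Fin (n + 1)) :
    ∫ x in {x | x i < 0}, fderiv ℝ h x (Pi.single i 1) = ∫ y, h (i.insertNth 0 y) := by
  rw [← integral_indicator (measurableSet_lt (measurable_pi_apply i) measurable_const),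
    integral_eq_integral_integral_insertNth ((hh.integrable_fderiv_apply hs _).indicator
      (measurableSet_lt (measurable_pi_apply i) measurable_const)) i]
  congr 1 with y
  simpa [indicator, ← integral_indicator measurableSet_Iio,
    ← insertNth_eq_insertNth_zero_add_smul] using
    integral_Iio_fderiv_line hh hs (i.insertNth 0 y) (v := Pi.single i 1) (by simp)

theorem setIntegral_halfSpace_fderiv_single_of_ne (hh : ContDiff ℝ 1 h) (hs : HasCompactSupport h)
    {i j : Fin (n + 1)} (hij : i ≠ j) :
    ∫ x in {x | x j < 0}, fderiv ℝ h x (Pi.single i 1) = 0 := by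
  obtain ⟨k, rfl⟩ := Fin.exists_succAbove_eq hij.symm
  rw [← integral_indicator (measurableSet_lt (measurable_pi_apply _) measurable_const),
    integral_eq_integral_integral_insertNth ((hh.integrable_fderiv_apply hs _).indicator
      (measurableSet_lt (measurable_pi_apply _) measurable_const)) i]
  refine integral_eq_zero_of_ae (ae_of_all _ fun y => ?_)
  by_cases hy : y k < 0
  · simpa [indicator, hy, ← insertNth_eq_insertNth_zero_add_smul] using
      integral_fderiv_line_eq_zero hh hs (i.insertNth 0 y) (v := Pi.single i 1) (by simp)
  · simp [indicator, hy]

end Coordinates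

theorem Fin.insertNth_two_zero (y : Fin 2 → ℝ) : (2 : Fin 3).insertNth 0 y = ![y 0, y 1, 0] := by
  funext j; fin_cases j <;> rfl

section Pdphi

variable {φ f g h : (Fin 3 → ℝ) → ℝ}

theorem setIntegral_lowerHalf_pd_two (hh : ContDiff ℝ 1 h) (hs : HasCompactSupport h) :
    ∫ x in lowerHalf, pd 2 h x = ∫ y : Fin 2 → ℝ, h ![y 0, y 1, 0] := by
  have h2 := setIntegral_halfSpace_fderiv_single_self hh hs 2
  simp only [Fin.insertNth_two_zero] at h2
  exact h2

theorem setIntegral_lowerHalf_pd_of_ne (hh : ContDiff ℝ 1 h) (hs : HasCompactSupport h)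
    {i : Fin 3} (hi : i ≠ 2) : ∫ x in lowerHalf, pd i h x = 0 :=
  setIntegral_halfSpace_fderiv_single_of_ne hh hs hi

theorem integrable_pd (hh : ContDiff ℝ 1 h) (hs : HasCompactSupport h) (i : Fin 3) :
    Integrable (pd i h) :=
  hh.integrable_fderiv_apply hs _

theorem contDiff_pd {n : ℕ∞} (hf : ContDiff ℝ (n + 1) f) (i : Fin 3) : ContDiff ℝ n (pd i f) :=
  (hf.fderiv_right le_rfl).clm_apply contDiff_const

theorem pd_mul (hf : Differentiable ℝ f) (hg : Differentiable ℝ g) (i : Fin 3) (x : Fin 3 → ℝ) :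
    pd i (fun y => f y * g y) x = pd i f x * g x + f x * pd i g x := by
  simp only [pd, fderiv_fun_mul (hf x) (hg x), add_apply, smul_apply, smul_eq_mul]
  ring

theorem pd_pd_comm (hφ : ContDiff ℝ 2 φ) (i j : Fin 3) : pd i (pd j φ) = pd j (pd i φ) :=
  funext fun x => fderiv_fderiv_apply_comm hφ x _ _

theorem pdphi_mul (hf : Differentiable ℝ f) (hg : Differentiable ℝ g)
    (i : Fin 3) (x : Fin 3 → ℝ) :
    pdphi φ i (fun y => f y * g y) x = pdphi φ i f x * g x + f x * pdphi φ i g x := by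
  unfold pdphi
  split_ifs <;> simp only [pd_mul hf hg] <;> ring

theorem continuous_pdphi (hφ : ContDiff ℝ 2 φ) (hz : ∀ x, pd 2 φ x ≠ 0) (hf : ContDiff ℝ 1 f)
    (i : Fin 3) : Continuous (pdphi φ i f) := by
  have hpdf (j : Fin 3) : Continuous (pd j f) := (contDiff_pd (n := 0) hf j).continuous
  have hpdφ (j : Fin 3) : Continuous (pd j φ) := (contDiff_pd (n := 1) hφ j).continuous
  unfold pdphi
  split_ifs
  · exact (hpdf 2).div (hpdφ 2) hz
  · exact (hpdf i).sub (((hpdφ i).div (hpdφ 2) hz).mul (hpdf 2))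

theorem pdphi_two_mul_pd_two (hz : ∀ x, pd 2 φ x ≠ 0) (x : Fin 3 → ℝ) :
    pdphi φ 2 h x * pd 2 φ x = pd 2 h x := by
  simp only [pdphi, if_true]
  exact div_mul_cancel₀ _ (hz x)

theorem pdphi_mul_pd_two_of_ne (hφ : ContDiff ℝ 2 φ) (hz : ∀ x, pd 2 φ x ≠ 0)
    (hh : Differentiable ℝ h) {i : Fin 3} (hi : i ≠ 2) (x : Fin 3 → ℝ) :
    pdphi φ i h x * pd 2 φ x
      = pd i (fun y => h y * pd 2 φ y) x - pd 2 (fun y => h y * pd i φ y) x := by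
  have hpdφ (j : Fin 3) : Differentiable ℝ (pd j φ) :=
    (contDiff_pd (n := 1) hφ j).differentiable one_ne_zero
  rw [pd_mul hh (hpdφ 2), pd_mul hh (hpdφ i), pd_pd_comm hφ i 2]
  simp only [pdphi, if_neg hi]
  field_simp [hz x]
  ring

theorem setIntegral_lowerHalf_pdphi_mul_pd_two (hφ : ContDiff ℝ 2 φ) (hz : ∀ x, pd 2 φ x ≠ 0)
    (hh : ContDiff ℝ 1 h) (hs : HasCompactSupport h) (i : Fin 3) :
    ∫ x in lowerHalf, pdphi φ i h x * pd 2 φ x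
      = ∫ y : Fin 2 → ℝ, h ![y 0, y 1, 0] *
          ![-(pd 0 φ ![y 0, y 1, 0]), -(pd 1 φ ![y 0, y 1, 0]), 1] i := by
  rcases eq_or_ne i 2 with rfl | hi
  · simp_rw [pdphi_two_mul_pd_two hz, setIntegral_lowerHalf_pd_two hh hs]
    simp
  have hpdφ (j : Fin 3) : ContDiff ℝ 1 (pd j φ) := contDiff_pd (n := 1) hφ j
  have hA := hh.mul (hpdφ 2)
  have hB := hh.mul (hpdφ i)
  have hnormal (p : Fin 3 → ℝ) : ![-(pd 0 φ p), -(pd 1 φ p), 1] i = -pd i φ p := by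
    fin_cases i <;> simp_all
  simp_rw [pdphi_mul_pd_two_of_ne hφ hz (hh.differentiable one_ne_zero) hi, hnormal, mul_neg]
  rw [integral_sub (integrable_pd hA hs.mul_right i).integrableOn
      (integrable_pd hB hs.mul_right 2).integrableOn,
    setIntegral_lowerHalf_pd_of_ne hA hs.mul_right hi, setIntegral_lowerHalf_pd_two hB hs.mul_right,
    integral_neg, zero_sub]

end Pdphi

/-- Integration by parts formula (2.9) of Lemma 2.2:
`∫_S (∂ᵢ^φ f) g ∂_zφ = − ∫_S f (∂ᵢ^φ g) ∂_zφ + ∫_{ℝ²} f g Nᵢ dy`,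
where `N(y) = (−∂₁φ(y,0), −∂₂φ(y,0), 1)`. -/
theorem integration_by_parts_pdphi (φ : (Fin 3 → ℝ) → ℝ) (hφ : ContDiff ℝ 2 φ)
    (hz : ∀ x, pd 2 φ x ≠ 0)
    (f g : (Fin 3 → ℝ) → ℝ) (hf : ContDiff ℝ 1 f) (hg : ContDiff ℝ 1 g)
    (hfs : HasCompactSupport f) (hgs : HasCompactSupport g) (i : Fin 3) :
    ∫ x in lowerHalf, pdphi φ i f x * g x * pd 2 φ x
      = -(∫ x in lowerHalf, f x * pdphi φ i g x * pd 2 φ x)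
        + ∫ y : Fin 2 → ℝ,
            f ![y 0, y 1, 0] * g ![y 0, y 1, 0] *
              (![-(pd 0 φ ![y 0, y 1, 0]), -(pd 1 φ ![y 0, y 1, 0]), 1] i) := by
  have hpd2φ : Continuous (pd 2 φ) := (contDiff_pd (n := 1) hφ 2).continuous
  have hleibniz (x : Fin 3 → ℝ) : pdphi φ i (fun y => f y * g y) x * pd 2 φ x
      = pdphi φ i f x * g x * pd 2 φ x + f x * pdphi φ i g x * pd 2 φ x := by
    rw [pdphi_mul (hf.differentiable one_ne_zero) (hg.differentiable one_ne_zero)]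
    ring
  have hint_f : Integrable fun x => pdphi φ i f x * g x * pd 2 φ x :=
    (((continuous_pdphi hφ hz hf i).mul hg.continuous).mul hpd2φ).integrable_of_hasCompactSupport
      hgs.mul_left.mul_right
  have hint_g : Integrable fun x => f x * pdphi φ i g x * pd 2 φ x :=
    ((hf.continuous.mul (continuous_pdphi hφ hz hg i)).mul hpd2φ).integrable_of_hasCompactSupport
      hfs.mul_right.mul_right
  rw [eq_neg_add_iff_add_eq, add_comm, ← integral_add hint_f.integrableOn hint_g.integrableOn]
  simpa only [hleibniz] using
    setIntegral_lowerHalf_pdphi_mul_pd_two hφ hz (hf.mul hg) hfs.mul_right i
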